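/- arXiv:1809.07095 — 7 statements merged into one kernel-verified Lean document; each statement's English description precedes it below -/
import Mathlib

section
/- If a quasigroup (Q, ·) satisfies the identity (x·y)·z = y·(z·x) for all x, y, z, then (Q, ·) is commutative. -/
theorem stmt_2 (Q : Type*) (m : Q → Q → Q)
    (hl : ∀ a : Q, Function.Bijective (fun x => m a x))
    (hr : ∀ a : Q, Function.Bijective (fun x => m x a))
    (h : ∀ x y z : Q, m (m x y) z = m y (m z x)) :
    ∀ x y : Q, m x y = m y x := by
  -- key identity (***): w(ab) = b(aw)
  have key : ∀ a w b : Q, m w (m a b) = m b (m a w) := by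
    intro a w b
    -- (**): z(w(xy)) = x(y(zw))
    have star : ∀ x y z w : Q, m z (m w (m x y)) = m x (m y (m z w)) := by
      intro x y z w
      have e1 : m (m (m x y) z) w = m z (m w (m x y)) := h (m x y) z w
      have e2 : m (m (m x y) z) w = m (m z x) (m w y) := by
        rw [h x y z]; exact h y (m z x) w
      have e3 : m (m z x) (m w y) = m x (m (m w y) z) := h z x (m w y)
      have e4 : m (m w y) z = m y (m z w) := h w y z
      rw [← e1, e2, e3, e4]
    have := star a b a w
    exact (hl a).1 this
  intro x y
  -- get e with m x e = x
  obtain ⟨e, he⟩ := (hl x).2 x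
  simp only at he
  -- e reverses products with x on either side
  have rev1 : ∀ w : Q, m e (m x w) = m w x := by
    intro w
    have := key x w e
    rw [he] at this
    exact this.symm
  have rev2 : ∀ z : Q, m e (m z x) = m x z := by
    intro z
    have := h x e z
    rw [he] at this
    exact this.symm
  -- L_e is an involution
  have inv : ∀ u : Q, m e (m e u) = u := by
    intro u
    obtain ⟨w, hw⟩ := (hl x).2 u
    simp only at hw
    rw [← hw, rev1, rev2]
  -- a b = (e b)(e a)
  have swap : ∀ w b : Q, m w b = m (m e b) (m e w) := by
    intro w b
    have := key e w (m e b)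
    rw [inv b] at this
    exact this
  -- f := m e e is a universal right identity
  set f := m e e with hf
  have fid : ∀ u : Q, m u f = u := by
    intro u
    have := swap e (m e u)
    rw [inv u] at this
    exact this.symm
  -- f(za) = az
  have frev : ∀ a z : Q, m f (m z a) = m a z := by
    intro a z
    have := h a f z
    rw [fid a] at this
    exact this.symm
  have finv : ∀ a : Q, m f (m f a) = a := by
    intro a
    rw [frev a f, fid a]
  -- a b = b (f a)
  have S : ∀ a b : Q, m a b = m b (m f a) := by
    intro a b
    have := h a b f
    rw [fid (m a b)] at this
    exact this
  -- (f a) b = b a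
  have U : ∀ a b : Q, m (m f a) b = m b a := by
    intro a b
    rw [S (m f a) b, finv a]
  -- conclude
  have : m x y = m (m f y) (m f x) := by
    have := key f x (m f y)
    rw [finv y] at this
    exact this
  rw [this, U y (m f x), U x y]
end

section
/- Every Neumann quasigroup is medial, i.e., it satisfies (x·y)·(u·v) = (x·u)·(y·v) for all x, y, u, v ∈ Q. -/
theorem stmt_7 (Q : Type*) (m : Q → Q → Q)
    (hl : ∀ a : Q, Function.Bijective (fun x => m a x))
    (hr : ∀ a : Q, Function.Bijective (fun x => m x a))
    (h : ∀ x y z : Q, m x (m (m y z) (m y x)) = z) :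
    ∀ x y u v : Q, m (m x y) (m u v) = m (m x u) (m y v) := by
  intro x y u v
  set e := m x x with he_def
  -- x * (w*w) = x
  have h3pre : ∀ a w : Q, m a (m w w) = a := by
    intro a w
    obtain ⟨t, ht⟩ := (hr a).2 w
    have ht' : m t a = w := ht
    have := h a t a
    rw [ht'] at this
    exact this
  have he : ∀ a, m a e = a := fun a => h3pre a x
  have hww : ∀ w, m w w = e := by
    intro w
    apply (hl x).1
    show m x (m w w) = m x e
    rw [h3pre x w]
    exact (he x).symm
  -- a * (a * z) = z
  have h3 : ∀ a z, m a (m a z) = z := by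
    intro a z
    have := h a a z
    rw [hww a, he (m a z)] at this
    exact this
  -- (a*b) * (a*c) = c*b
  have h4 : ∀ a b c, m (m a b) (m a c) = m c b := by
    intro a b c
    apply (hl c).1
    show m c (m (m a b) (m a c)) = m c (m c b)
    rw [h c a b, h3 c b]
  -- e * (a*b) = b*a
  have h5 : ∀ a b, m e (m a b) = m b a := by
    intro a b
    have := h4 a a b
    rwa [hww a] at this
  -- a * (e*b) = b * (e*a)
  have h8 : ∀ a b, m a (m e b) = m b (m e a) := by
    intro a b
    have := h4 e (m e a) b
    rwa [h3 e a] at this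
  -- (a*t)*a = e*t
  have hxt : ∀ a t, m (m a t) a = m e t := by
    intro a t
    have := h4 a t e
    rwa [he a] at this
  -- (a*b)*(c*d) = (d*c)*(b*a)
  have h6 : ∀ a b c d, m (m a b) (m c d) = m (m d c) (m b a) := by
    intro a b c d
    rw [← h5 b a, ← h5 d c, h4 e]
  -- key "commutation": p*((e*r)*q) = r*((e*q)*p)
  have hA : ∀ p q r, m p (m (m e r) q) = m r (m (m e q) p) := by
    intro p q r
    obtain ⟨t, ht⟩ := (hr p).2 q
    have ht' : m t p = q := ht
    have L : m p (m (m e r) q) = m t (m e r) := by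
      rw [← ht']
      have := h p t (m t (m e r))
      rw [h3 t (m e r)] at this
      exact this
    have R : m r (m (m e q) p) = m t (m e r) := by
      rw [← ht', h5 t p, hxt p t, h8 r t]
    rw [L, R]
  -- associativity of a∘b := a*(e*b)
  have hassoc : ∀ a b c, m (m a (m e b)) (m e c) = m a (m e (m b (m e c))) := by
    intro a b c
    rw [h6 a (m e b) e c, he c, h5 b (m e c)]
    exact (hA a b c).symm
  -- left commutativity of ∘
  have hlc : ∀ a b c, m a (m e (m b (m e c))) = m b (m e (m a (m e c))) := by
    intro a b c
    rw [← hassoc a b c, h8 a b, hassoc b a c]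
  -- (e*a)*b = (e*b)*a
  have hswap : ∀ a b, m (m e a) b = m (m e b) a := by
    intro a b
    conv_lhs => rw [← h3 e b]
    rw [h8 (m e a) (m e b), h3 e a]
  -- reductions of the two sides
  have L1 : m (m x y) (m u v) = m (m x (m u v)) y := by
    have := h4 x y (m x (m u v))
    rwa [h3 x (m u v)] at this
  have R1 : m (m x u) (m y v) = m (m x (m y v)) u := by
    have := h4 x u (m x (m y v))
    rwa [h3 x (m y v)] at this
  have rewr : ∀ a b c, m (m x (m a b)) c = m (m b a) (m e (m x c)) := by
    intro a b c
    conv_lhs => rw [← h5 b a, h8 x (m b a), ← h3 e c]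
    rw [hassoc (m b a) x (m e c), h3 e c]
  have norm : ∀ a b, m (m v a) (m e (m x b)) = m v (m e (m x (m e (m (m e a) b)))) := by
    intro a b
    conv_lhs => rw [← h3 e a, ← h3 e b]
    rw [hassoc v (m e a) (m x (m e (m e b))), hlc (m e a) x (m e b), h3 e b]
  rw [L1, R1, rewr u v y, rewr y v u, norm u y, norm y u, hswap u y]
end

section
/- Every Schweizer quasigroup is a Neumann quasigroup: if a quasigroup (Q, ·) satisfies (y·z)·(y·x) = x·z for all x, y, z, then it satisfies x·((y·z)·(y·x)) = z for all x, y, z. -/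
theorem stmt_11 (Q : Type*) (m : Q → Q → Q)
    (hl : ∀ a : Q, Function.Bijective (fun x => m a x))
    (hr : ∀ a : Q, Function.Bijective (fun x => m x a))
    (h : ∀ x y z : Q, m (m y z) (m y x) = m x z) :
    ∀ x y z : Q, m x (m (m y z) (m y x)) = z := by
  have key : ∀ w a : Q, m w (m a a) = w := by
    intro w a
    obtain ⟨b, hb⟩ := (hl a).2 w
    simp only at hb
    rw [← hb]
    exact h a a b
  intro x y z
  rw [h x y z]
  have := h z x (m z z)
  rwa [key x z, key z z] at this
end

section
/- Every Neumann quasigroup is a Schweizer quasigroup: if a quasigroup (Q, ·) satisfies x·((y·z)·(y·x)) = z for all x, y, z, then it satisfies (y·z)·(y·x) = x·z for all x, y, z. -/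
theorem stmt_12 (Q : Type*) (m : Q → Q → Q)
    (hl : ∀ a : Q, Function.Bijective (fun x => m a x))
    (hr : ∀ a : Q, Function.Bijective (fun x => m x a))
    (h : ∀ x y z : Q, m x (m (m y z) (m y x)) = z) :
    ∀ x y z : Q, m (m y z) (m y x) = m x z := by
  -- key : every "square" m u u acts as a right identity
  have key : ∀ a u : Q, m a (m u u) = a := by
    intro a u
    obtain ⟨y, hy⟩ := (hr a).2 u
    have hy' : m y a = u := hy
    have := h a y a
    rw [hy'] at this
    exact this
  -- left translations are involutions
  have inv : ∀ a w : Q, m a (m a w) = w := by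
    intro a w
    have := h a a w
    rw [key (m a w) a] at this
    exact this
  intro x y z
  apply (hl x).1
  show m x (m (m y z) (m y x)) = m x (m x z)
  rw [h, inv]
end

section
/- In a Schweizer quasigroup, the element e = y·y is independent of y and is a right identity: x·(y·y) = x for all x, y ∈ Q. -/
theorem stmt_14 (Q : Type*) (m : Q → Q → Q)
    (hl : ∀ a : Q, Function.Bijective (fun x => m a x))
    (hr : ∀ a : Q, Function.Bijective (fun x => m x a))
    (h : ∀ x y z : Q, m (m y z) (m y x) = m x z) :
    (∀ y y' : Q, m y y = m y' y') ∧ (∀ x y : Q, m x (m y y) = x) := by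
  have key : ∀ a x : Q, m a a = m x x := by
    intro a x
    obtain ⟨y, hy⟩ := (hr x).2 a
    simp only at hy
    have := h x y x
    rw [hy] at this
    exact this
  constructor
  · intro y y'; exact key y y'
  · intro x y
    obtain ⟨z, hz⟩ := (hl y).2 x
    simp only at hz
    have := h y y z
    rw [hz] at this
    exact this
end

section
/- Every Schweizer quasigroup satisfies the left inverse property identity y·(y·x) = x for all x, y ∈ Q. -/
theorem stmt_15 (Q : Type*) (m : Q → Q → Q)
    (hl : ∀ a : Q, Function.Bijective (fun x => m a x))
    (hr : ∀ a : Q, Function.Bijective (fun x => m x a))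
    (h : ∀ x y z : Q, m (m y z) (m y x) = m x z) :
    ∀ x y : Q, m y (m y x) = x := by
  intro x y
  set c := m y y with hc
  -- all squares equal c
  have hsq : ∀ a : Q, m a a = c := by
    intro a
    obtain ⟨b, hb⟩ := (hr y).2 a
    simp only at hb
    rw [← hb, h y b y, hc]
  -- c·(a·b) = b·a
  have hstar : ∀ a b : Q, m c (m a b) = m b a := by
    intro a b
    have := h b a a
    rwa [hsq a] at this
  -- y·c = y
  have hyc : m y c = y := by
    have h1 := hstar y c
    have h2 : m c y = (fun t => m c t) y := rfl
    exact (hl c).1 (by simpa using h1)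
  -- (y·x)·y = c·x
  have hkey : m (m y x) y = m c x := by
    have := h c y x
    rwa [hyc] at this
  -- finish by injectivity of left mult by c
  have : m c (m y (m y x)) = m c x := by
    rw [hstar y (m y x), hkey]
  exact (hl c).1 this
end

section
/- Let (Q, +) be an abelian group and x·y = x − y. Every autotopy of (Q, ·) has the form (L⁺_a ∘ θ, L⁺_{−b} ∘ θ, L⁺_{a+b} ∘ θ) for some a, b ∈ Q and θ ∈ Aut(Q, +), where L⁺_c(x) = c + x; and conversely every triple of this form is an autotopy. -/
theorem stmt_16 (Q : Type*) [AddCommGroup Q] (m : Q → Q → Q)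
    (hm : ∀ x y : Q, m x y = x - y)
    (α β γ : Q → Q) (hα : Function.Bijective α) (hβ : Function.Bijective β)
    (hγ : Function.Bijective γ) :
    (∀ x y : Q, m (α x) (β y) = γ (m x y)) ↔
    ∃ (a b : Q) (θ : Q ≃+ Q),
      (∀ x : Q, α x = a + θ x) ∧ (∀ x : Q, β x = -b + θ x) ∧
      (∀ x : Q, γ x = (a + b) + θ x) := by
  constructor
  · intro h
    have key : ∀ x y : Q, α x - β y = γ (x - y) := by
      intro x y; have := h x y; simpa [hm] using this
    have hγ0 : γ 0 = α 0 - β 0 := by simpa using (key 0 0).symm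
    have h1 : ∀ x : Q, α x = γ x + β 0 := by
      intro x
      have := key x 0
      simp at this
      rw [← this]; abel
    have h2 : ∀ y : Q, β (-y) = α 0 - γ y := by
      intro y
      have := key 0 (-y)
      simp at this
      rw [← this]; abel
    have hadd : ∀ x y : Q, γ (x + y) = γ x + γ y - γ 0 := by
      intro x y
      have e1 : γ (x + y) = α x - β (-y) := by
        have := key x (-y); simpa using this.symm
      rw [e1, h1 x, h2 y, hγ0]; abel
    set θf : Q → Q := fun x => γ x - γ 0 with hθf
    have hθbij : Function.Bijective θf := (Equiv.subRight (γ 0)).bijective.comp hγ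
    have hθadd : ∀ x y : Q, θf (x + y) = θf x + θf y := by
      intro x y
      simp only [hθf, hadd x y]; abel
    let θ : Q ≃+ Q := AddEquiv.mk' (Equiv.ofBijective θf hθbij) hθadd
    have hθ : ∀ x : Q, (θ : Q → Q) x = γ x - γ 0 := fun x => rfl
    refine ⟨α 0, -β 0, θ, ?_, ?_, ?_⟩
    · intro x
      rw [hθ, h1 x, hγ0]; abel
    · intro x
      have := h2 (-x)
      simp only [neg_neg] at this
      have hneg : γ (-x) = γ 0 + γ 0 - γ x := by
        have hn := map_neg θ x
        simp only [hθ] at hn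
        have := sub_eq_iff_eq_add.mp hn
        rw [this]; abel
      rw [this, hneg, hθ, hγ0]; abel
    · intro x
      rw [hθ, hγ0]; abel
  · rintro ⟨a, b, θ, h1, h2, h3⟩ x y
    simp only [hm, h1, h2, h3, map_sub]
    abel
end
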